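/- Let H ≥ 1 and K ≥ 1 be integers, G a finite type, g : {1,…,K} → G, and φ : {1,…,K} → ℝ with φ(k) ≥ 0 for all k. For each k let n_k = |{k' < k : g(k') = g(k)}|, and for s ∈ G and i ≥ 1 with at least i indices mapped to s, let τ(s, i) denote the i-th smallest index k' with g(k') = s (note τ(g(k), i) < k whenever 1 ≤ i ≤ n_k). Then Σ_{k=1}^K Σ_{i=1}^{n_k} α_{n_k}^i · φ(τ(g(k), i)) ≤ (1 + 1/H) · Σ_{k=1}^K φ(k). -/

import Mathlib

/-- Learning rate `α_t = (H+1)/(H+t)`. -/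
noncomputable def lr (H : ℕ) (t : ℕ) : ℝ := ((H : ℝ) + 1) / ((H : ℝ) + t)

/-- Weights `α_t^0 = ∏_{j=1}^t (1 - α_j)` and `α_t^i = α_i ∏_{j=i+1}^t (1 - α_j)` for `i ≥ 1`. -/
noncomputable def alphaW (H : ℕ) (t i : ℕ) : ℝ :=
  if i = 0 then ∏ j ∈ Finset.Icc 1 t, (1 - lr H j)
  else lr H i * ∏ j ∈ Finset.Icc (i + 1) t, (1 - lr H j)

/-!
Grouping the episodes by the visited pair `g k` reduces the bound to one fiber `S`, enumerated
increasingly by `Nat.nth (· ∈ S)`: the element of rank `n` contributes `∑_{i ≤ n} α_n^i φ(τ_i)`.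
Swapping the two sums, each `φ(τ_i)` is weighted by `∑_{t ≥ i} α_t^i`, whose partial sums are
`1 + 1/H - (T/H) α_T^i ≤ 1 + 1/H`.
-/

open Finset

section Weights

variable {H : ℕ}

lemma lr_nonneg (t : ℕ) : 0 ≤ lr H t := by
  unfold lr; positivity

lemma one_sub_lr_succ (t : ℕ) : 1 - lr H (t + 1) = t / (H + t + 1 : ℝ) := by
  unfold lr
  push_cast
  field_simp
  ring

lemma one_sub_lr_nonneg {t : ℕ} (ht : t ≠ 0) : 0 ≤ 1 - lr H t := by
  obtain ⟨t, rfl⟩ := Nat.exists_eq_succ_of_ne_zero ht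
  rw [one_sub_lr_succ]
  positivity

lemma alphaW_nonneg (t i : ℕ) : 0 ≤ alphaW H t i := by
  unfold alphaW
  split_ifs
  · exact prod_nonneg fun j hj => one_sub_lr_nonneg (by grind)
  · exact mul_nonneg (lr_nonneg i)
      (prod_nonneg fun j hj => one_sub_lr_nonneg (by grind))

lemma alphaW_self {i : ℕ} (hi : i ≠ 0) : alphaW H i i = lr H i := by
  simp [alphaW, hi]

lemma alphaW_succ {i t : ℕ} (hi : i ≠ 0) (hit : i ≤ t) :
    alphaW H (t + 1) i = alphaW H t i * (1 - lr H (t + 1)) := by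
  simp only [alphaW, hi, if_false]
  rw [prod_Icc_succ_top (by omega), mul_assoc]

/-- Partial sums of `t ↦ α_t^i`; letting `T → ∞` gives `∑_{t ≥ i} α_t^i = 1 + 1/H`. -/
lemma sum_Icc_alphaW (hH : 0 < H) {i : ℕ} (hi : i ≠ 0) {T : ℕ} (hiT : i ≤ T) :
    ∑ t ∈ Icc i T, alphaW H t i = 1 + 1 / (H : ℝ) - T / H * alphaW H T i := by
  have hH' : (0 : ℝ) < H := by exact_mod_cast hH
  induction T, hiT using Nat.le_induction with
  | base =>
    rw [Icc_self, sum_singleton, alphaW_self hi, lr]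
    field_simp
    ring
  | succ T hiT ih =>
    rw [sum_Icc_succ_top (by omega), ih, alphaW_succ hi hiT, one_sub_lr_succ]
    push_cast
    field_simp
    ring

lemma sum_Ico_alphaW_le (hH : 0 < H) {i : ℕ} (hi : i ≠ 0) (N : ℕ) :
    ∑ t ∈ Ico i N, alphaW H t i ≤ 1 + 1 / (H : ℝ) := by
  rcases le_or_gt N i with hN | hN
  · rw [Ico_eq_empty_of_le hN, sum_empty]
    positivity
  · obtain ⟨T, rfl⟩ : ∃ T, N = T + 1 := ⟨N - 1, by omega⟩
    rw [Ico_add_one_right_eq_Icc, sum_Icc_alphaW hH hi (by omega)]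
    have : (0 : ℝ) ≤ T / H * alphaW H T i := mul_nonneg (by positivity) (alphaW_nonneg T i)
    linarith

theorem sum_range_sum_alphaW_mul_le (hH : 0 < H) (N : ℕ) {x : ℕ → ℝ}
    (hx : ∀ j < N, 0 ≤ x j) :
    ∑ t ∈ range N, ∑ i ∈ Icc 1 t, alphaW H t i * x (i - 1) ≤
      (1 + 1 / (H : ℝ)) * ∑ j ∈ range N, x j := by
  calc ∑ t ∈ range N, ∑ i ∈ Icc 1 t, alphaW H t i * x (i - 1)
      = ∑ i ∈ Ico 1 N, (∑ t ∈ Ico i N, alphaW H t i) * x (i - 1) := by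
        simp_rw [sum_mul]
        exact sum_comm' fun t i => by simp only [mem_range, mem_Icc, mem_Ico]; omega
    _ ≤ ∑ i ∈ Ico 1 N, (1 + 1 / (H : ℝ)) * x (i - 1) := by
        gcongr with i hi
        · exact hx _ (by grind)
        · exact sum_Ico_alphaW_le hH (by grind) N
    _ = (1 + 1 / (H : ℝ)) * ∑ j ∈ range (N - 1), x j := by
        rw [← mul_sum, sum_Ico_eq_sum_range]
        simp
    _ ≤ (1 + 1 / (H : ℝ)) * ∑ j ∈ range N, x j := by
        gcongr
        · exact fun j hj _ => hx j (mem_range.1 hj)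
        · exact N.sub_le 1

end Weights

namespace Finset

lemma sum_comp_count_mem {M : Type*} [AddCommMonoid M] (S : Finset ℕ) (f : ℕ → M) :
    ∑ k ∈ S, f (Nat.count (· ∈ S) k) = ∑ t ∈ range #S, f t := by
  have hS : (Set.ofPred (· ∈ S)).Finite := S.finite_toSet
  have hcard : #hS.toFinset = #S := congrArg card S.finite_toSet_toFinset
  refine sum_nbij' (Nat.count (· ∈ S)) (Nat.nth (· ∈ S)) (fun k hk => ?_) (fun t ht => ?_)
    (fun k hk => Nat.nth_count hk) (fun t ht => ?_) (fun _ _ => rfl)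
  · exact mem_range.2 (hcard ▸ Nat.count_lt_card hS hk)
  · exact Nat.nth_mem_of_lt_card hS (hcard ▸ mem_range.1 ht)
  · exact Nat.count_nth_of_lt_card_finite hS (hcard ▸ mem_range.1 ht)

lemma sum_comp_nth_mem {M : Type*} [AddCommMonoid M] (S : Finset ℕ) (f : ℕ → M) :
    ∑ t ∈ range #S, f (Nat.nth (· ∈ S) t) = ∑ k ∈ S, f k := by
  rw [← sum_comp_count_mem]
  exact sum_congr rfl fun k hk => congrArg f (Nat.nth_count hk)

end Finset

theorem sum_sum_alphaW_mul_nth_le {H : ℕ} (hH : 0 < H) (S : Finset ℕ) {φ : ℕ → ℝ}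
    (hφ : ∀ k ∈ S, 0 ≤ φ k) :
    ∑ k ∈ S, ∑ i ∈ Icc 1 (Nat.count (· ∈ S) k),
        alphaW H (Nat.count (· ∈ S) k) i * φ (Nat.nth (· ∈ S) (i - 1)) ≤
      (1 + 1 / (H : ℝ)) * ∑ k ∈ S, φ k := by
  rw [sum_comp_count_mem S fun n => ∑ i ∈ Icc 1 n, alphaW H n i * φ (Nat.nth (· ∈ S) (i - 1)),
    ← sum_comp_nth_mem S φ]
  refine sum_range_sum_alphaW_mul_le hH #S fun j hj => hφ _ ?_
  exact Nat.nth_mem_of_lt_card S.finite_toSet (by rwa [S.finite_toSet_toFinset])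

lemma Nat.count_mem_filter_Icc {p : ℕ → Prop} [DecidablePred p] {K k : ℕ} (hk : k ≤ K) :
    Nat.count (· ∈ (Icc 1 K).filter p) k = #((Ico 1 k).filter p) := by
  rw [Nat.count_eq_card_filter_range]
  congr 1
  ext j
  grind

theorem swap_summation_bound_general (H : ℕ) (hH : 1 ≤ H) (K : ℕ)
    (G : Type*) [DecidableEq G] (g : ℕ → G) (φ : ℕ → ℝ)
    (hφ : ∀ k ∈ Finset.Icc 1 K, 0 ≤ φ k) :
    (∑ k ∈ Finset.Icc 1 K,
      ∑ i ∈ Finset.Icc 1 (((Finset.Ico 1 k).filter (fun k' => g k' = g k)).card),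
        alphaW H (((Finset.Ico 1 k).filter (fun k' => g k' = g k)).card) i *
          φ (Nat.nth (fun k' => 1 ≤ k' ∧ k' ≤ K ∧ g k' = g k) (i - 1))) ≤
      (1 + 1 / (H : ℝ)) * ∑ k ∈ Finset.Icc 1 K, φ k := by
  have hg : ∀ k ∈ Icc 1 K, g k ∈ (Icc 1 K).image g := fun k hk => mem_image_of_mem g hk
  rw [← sum_fiberwise_of_maps_to hg, ← sum_fiberwise_of_maps_to hg (f := φ), mul_sum]
  refine sum_le_sum fun s _ => le_of_eq_of_le (sum_congr rfl fun k hk => ?_)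
    (sum_sum_alphaW_mul_nth_le hH _ fun k hk => hφ k (mem_filter.1 hk).1)
  obtain ⟨hkK, hgk⟩ := mem_filter.1 hk
  have hfiber : (fun k' => 1 ≤ k' ∧ k' ≤ K ∧ g k' = s) = (· ∈ (Icc 1 K).filter (g · = s)) := by
    ext k'
    simp only [mem_filter, mem_Icc, and_assoc]
  rw [hgk, hfiber, Nat.count_mem_filter_Icc (mem_Icc.1 hkK).2]

/-- with `n_k = #{k' < k : g(k') = g(k)}` (counting only indices `k' ≥ 1`) and
`τ(s,i)` the `i`-th smallest index `k'` with `1 ≤ k' ≤ K` and `g(k') = s`,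
`∑_{k=1}^K ∑_{i=1}^{n_k} α_{n_k}^i φ(τ(g(k), i)) ≤ (1 + 1/H) ∑_{k=1}^K φ(k)`. -/
theorem swap_summation_bound (H : ℕ) (hH : 1 ≤ H) (K : ℕ) (hK : 1 ≤ K)
    (G : Type*) [Fintype G] [DecidableEq G] (g : ℕ → G) (φ : ℕ → ℝ)
    (hφ : ∀ k ∈ Finset.Icc 1 K, 0 ≤ φ k) :
    (∑ k ∈ Finset.Icc 1 K,
      ∑ i ∈ Finset.Icc 1 (((Finset.Ico 1 k).filter (fun k' => g k' = g k)).card),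
        alphaW H (((Finset.Ico 1 k).filter (fun k' => g k' = g k)).card) i *
          φ (Nat.nth (fun k' => 1 ≤ k' ∧ k' ≤ K ∧ g k' = g k) (i - 1))) ≤
      (1 + 1 / (H : ℝ)) * ∑ k ∈ Finset.Icc 1 K, φ k :=
  swap_summation_bound_general H hH K G g φ hφ
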